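/- arXiv:1608.06265 — 2 statements merged into one kernel-verified Lean document; each statement's English description precedes it below -/
import Mathlib

section
/- For a finitely generated group Γ, the following are equivalent: (2') there exist a commutative unital ring R, an integer n ≥ 1 and a group homomorphism Γ → GL_n(R) whose image is infinite; (3') there exist a field K, an integer n ≥ 1 and a group homomorphism Γ → GL_n(K) whose image is infinite. -/
/-!
Restricting to the subring generated by the entries of the generators and their inverses, we may
assume `R` Noetherian; then its nilradical `N` is nilpotent and `R` has finitely many minimal
primes `p`. Let `Δ j` be the preimage in `Γ` of the congruence subgroup of level `N ^ j`. If all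
images in `GL_n (Frac (R ⧸ p))` are finite, `Δ 1` has finite index. For `j ≥ 1` the map
`g ↦ g - 1 mod N ^ (j + 1)` is a homomorphism from `Δ j` to an abelian group with kernel
`Δ (j + 1)`. If its image is infinite, the finitely generated group `Δ j` has a character to `ℚˣ`
with infinite image, and the monomial representation of `Γ` induced from it has infinite image.
Otherwise `Δ (j + 1)` has finite index as well; since `N ^ k = 0`, so has the kernel of the
representation, contradicting the infinite image.
-/

open Matrix Function

universe u

section InfiniteRange

variable {G H K : Type*} [Group G] [Group H] [Group K]

theorem MonoidHom.infinite_range_iff (f : G →* H) : Infinite f.range ↔ (Set.range f).Infinite := by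
  rw [← MonoidHom.coe_range]
  exact Set.infinite_coe_iff

theorem MonoidHom.infinite_range_of_infinite_range_comp {f : G →* H} (g : H →* K)
    (h : Infinite (g.comp f).range) : Infinite f.range := by
  rw [MonoidHom.infinite_range_iff, MonoidHom.coe_comp, Set.range_comp] at *
  exact h.of_image g

theorem MonoidHom.infinite_range_comp_of_injective (f : G →* H) {g : H →* K} (hg : Injective g)
    (h : Infinite f.range) : Infinite (g.comp f).range := by
  rw [MonoidHom.infinite_range_iff, MonoidHom.coe_comp, Set.range_comp] at *
  exact h.image hg.injOn

theorem MonoidHom.exists_comp_eq_of_range_le {f : G →* K} {g : H →* K} (hg : Injective g)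
    (h : f.range ≤ g.range) : ∃ f₀ : G →* H, g.comp f₀ = f :=
  ⟨(MonoidHom.ofInjective hg).symm.toMonoidHom.comp (f.codRestrict _ fun x => h ⟨x, rfl⟩),
    MonoidHom.ext fun _ => MonoidHom.apply_ofInjective_symm hg _⟩

end InfiniteRange

namespace Matrix.GeneralLinearGroup

variable {Γ : Type*} [Group Γ] {n : Type*} [Fintype n] [DecidableEq n] {R S : Type*} [CommRing R]
  [CommRing S]

theorem map_injective {φ : R →+* S} (hφ : Injective φ) : Injective (map (n := n) φ) :=
  fun _ _ hgh => Units.ext <| Matrix.map_injective hφ (congrArg Units.val hgh)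

theorem mem_range_map_subtype {T : Subring R} (g : GL n R) (hg : ∀ i j, g i j ∈ T)
    (hg' : ∀ i j, (↑g⁻¹ : Matrix n n R) i j ∈ T) : g ∈ (map (n := n) T.subtype).range := by
  have hinj : Injective (T.subtype.mapMatrix : Matrix n n T → Matrix n n R) :=
    Matrix.map_injective Subtype.val_injective
  refine ⟨⟨Matrix.of fun i j => ⟨g i j, hg i j⟩,
    Matrix.of fun i j => ⟨(↑g⁻¹ : Matrix n n R) i j, hg' i j⟩, hinj ?_, hinj ?_⟩, Units.ext rfl⟩
  · rw [map_mul, map_one]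
    exact g.mul_inv
  · rw [map_mul, map_one]
    exact g.inv_mul

theorem nonempty_of_infinite_range (f : Γ →* GL n R) (hf : Infinite f.range) : Nonempty n := by
  by_contra h
  rw [not_nonempty_iff] at h
  exact not_finite f.range

end Matrix.GeneralLinearGroup

section Induced

variable {Γ : Type*} [Group Γ] {H : Subgroup Γ} {R : Type*} [CommRing R]

open scoped Classical in
noncomputable def MonoidHom.extendByZero (ρ : H →* Rˣ) (g : Γ) : R :=
  if hg : g ∈ H then ρ ⟨g, hg⟩ else 0

namespace MonoidHom

variable (ρ : H →* Rˣ)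

theorem extendByZero_of_mem {g : Γ} (hg : g ∈ H) : ρ.extendByZero g = ρ ⟨g, hg⟩ :=
  dif_pos hg

theorem extendByZero_of_notMem {g : Γ} (hg : g ∉ H) : ρ.extendByZero g = 0 :=
  dif_neg hg

theorem extendByZero_one : ρ.extendByZero 1 = 1 := by
  rw [ρ.extendByZero_of_mem H.one_mem]
  exact congrArg Units.val ρ.map_one

theorem extendByZero_mul_of_mem (a : Γ) {b : Γ} (hb : b ∈ H) :
    ρ.extendByZero (a * b) = ρ.extendByZero a * ρ.extendByZero b := by
  by_cases ha : a ∈ H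
  · rw [ρ.extendByZero_of_mem (H.mul_mem ha hb), ρ.extendByZero_of_mem ha,
      ρ.extendByZero_of_mem hb, ← Units.val_mul, ← map_mul]
    rfl
  · rw [ρ.extendByZero_of_notMem (mt (H.mul_mem_cancel_right hb).mp ha),
      ρ.extendByZero_of_notMem ha, zero_mul]

end MonoidHom

theorem QuotientGroup.out_inv_mul_mul_out_mem_iff (g : Γ) (x y : Γ ⧸ H) :
    x.out⁻¹ * g * y.out ∈ H ↔ x = g • y := by
  rw [mul_assoc, ← QuotientGroup.eq, QuotientGroup.out_eq', ← smul_eq_mul,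
    ← MulAction.Quotient.smul_mk, QuotientGroup.out_eq']

/-- The induced representation `Ind_H^Γ ρ` in the basis of coset representatives `x.out`. -/
noncomputable def inducedMatrix (ρ : H →* Rˣ) (g : Γ) : Matrix (Γ ⧸ H) (Γ ⧸ H) R :=
  Matrix.of fun x y => ρ.extendByZero (x.out⁻¹ * g * y.out)

theorem inducedMatrix_one [DecidableEq (Γ ⧸ H)] (ρ : H →* Rˣ) : inducedMatrix ρ 1 = 1 := by
  ext x y
  by_cases hxy : x = y
  · subst hxy
    simp [inducedMatrix, ρ.extendByZero_one]
  · rw [inducedMatrix, of_apply, one_apply_ne hxy, ρ.extendByZero_of_notMem]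
    rwa [QuotientGroup.out_inv_mul_mul_out_mem_iff, one_smul]

theorem inducedMatrix_mul [Fintype (Γ ⧸ H)] (ρ : H →* Rˣ) (g h : Γ) :
    inducedMatrix ρ (g * h) = inducedMatrix ρ g * inducedMatrix ρ h := by
  ext x z
  have hmem : (h • z).out⁻¹ * h * z.out ∈ H :=
    (QuotientGroup.out_inv_mul_mul_out_mem_iff _ _ _).mpr rfl
  rw [mul_apply, Finset.sum_eq_single (h • z)]
  · simp only [inducedMatrix, of_apply]
    rw [← ρ.extendByZero_mul_of_mem _ hmem]
    group
  · intro y _ hy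
    simp only [inducedMatrix, of_apply]
    rw [ρ.extendByZero_of_notMem
      (mt (QuotientGroup.out_inv_mul_mul_out_mem_iff _ _ _).mp hy), mul_zero]
  · exact fun h => (h (Finset.mem_univ _)).elim

variable [Fintype (Γ ⧸ H)] [DecidableEq (Γ ⧸ H)]

noncomputable def inducedMonomialRep (ρ : H →* Rˣ) : Γ →* GL (Γ ⧸ H) R :=
  MonoidHom.toHomUnits
    { toFun := inducedMatrix ρ
      map_one' := inducedMatrix_one ρ
      map_mul' := inducedMatrix_mul ρ }

theorem inducedMonomialRep_apply (ρ : H →* Rˣ) (g : Γ) :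
    (inducedMonomialRep ρ g : Matrix (Γ ⧸ H) (Γ ⧸ H) R) = inducedMatrix ρ g := rfl

theorem exists_inducedMonomialRep_apply_mk_one_eq (ρ : H →* Rˣ) (k : H) :
    ∃ g : Γ, (inducedMonomialRep ρ g : Matrix (Γ ⧸ H) (Γ ⧸ H) R) (1 : Γ) (1 : Γ) = ρ k := by
  obtain ⟨t, ht⟩ := QuotientGroup.mk_out_eq_mul H 1
  refine ⟨(t : Γ) * k * (t : Γ)⁻¹, ?_⟩
  rw [inducedMonomialRep_apply, inducedMatrix, of_apply, ht,
    show ((1 : Γ) * t)⁻¹ * (t * k * (t : Γ)⁻¹) * (1 * t) = k by group, ρ.extendByZero_of_mem k.2]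

theorem infinite_range_inducedMonomialRep (ρ : H →* Rˣ) (hρ : Infinite ρ.range) :
    Infinite (inducedMonomialRep ρ).range := by
  rw [MonoidHom.infinite_range_iff] at *
  refine Set.Infinite.of_image (fun u : GL (Γ ⧸ H) R => u (1 : Γ) (1 : Γ)) ?_
  refine ((hρ.image Units.val_injective.injOn).mono ?_)
  rintro _ ⟨_, ⟨k, rfl⟩, rfl⟩
  obtain ⟨g, hg⟩ := exists_inducedMonomialRep_apply_mk_one_eq ρ k
  exact ⟨_, ⟨g, rfl⟩, hg⟩

end Induced

def HasInfiniteLinearImage (Γ : Type*) [Group Γ] (R : Type*) [CommRing R] : Prop :=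
  ∃ (m : ℕ) (π : Γ →* GL (Fin m) R), Infinite π.range

section HasInfiniteLinearImage

variable {Γ : Type*} [Group Γ] {R : Type*} [CommRing R]

theorem hasInfiniteLinearImage_of_fintype {ι : Type*} [Fintype ι] [DecidableEq ι]
    (π : Γ →* GL ι R) (hπ : Infinite π.range) : HasInfiniteLinearImage Γ R :=
  let e := Units.mapEquiv (reindexAlgEquiv R R (Fintype.equivFin ι)).toMulEquiv
  ⟨_, e.toMonoidHom.comp π, π.infinite_range_comp_of_injective e.injective hπ⟩

theorem hasInfiniteLinearImage_of_injective {S : Type*} [CommRing S] {φ : R →+* S}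
    (hφ : Injective φ) {ι : Type*} [Fintype ι] [DecidableEq ι] (π : Γ →* GL ι R)
    (hπ : Infinite π.range) : HasInfiniteLinearImage Γ S :=
  hasInfiniteLinearImage_of_fintype _
    (π.infinite_range_comp_of_injective (GeneralLinearGroup.map_injective hφ) hπ)

theorem hasInfiniteLinearImage_of_finiteIndex (H : Subgroup Γ) [H.FiniteIndex] (ρ : H →* Rˣ)
    (hρ : Infinite ρ.range) : HasInfiniteLinearImage Γ R := by
  classical
  have : Fintype (Γ ⧸ H) := H.fintypeQuotientOfFiniteIndex
  exact hasInfiniteLinearImage_of_fintype _ (infinite_range_inducedMonomialRep ρ hρ)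

end HasInfiniteLinearImage

theorem CommGroup.exists_surjective_multiplicative_int (A : Type*) [CommGroup A] [Group.FG A]
    [Infinite A] : ∃ χ : A →* Multiplicative ℤ, Surjective χ := by
  obtain ⟨ι, j, _, _, p, hp, e, ⟨φ⟩⟩ := CommGroup.equiv_free_prod_prod_multiplicative_zmod A
  have : ∀ i, NeZero (p i ^ e i) := fun i => ⟨pow_ne_zero _ (hp i).ne_zero⟩
  obtain ⟨j₀⟩ : Nonempty j := by
    by_contra h
    rw [not_nonempty_iff] at h
    have := Finite.of_equiv _ φ.symm.toEquiv
    exact not_finite A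
  exact ⟨(Pi.evalMonoidHom _ j₀).comp ((MonoidHom.fst _ _).comp φ.toMonoidHom),
    (surjective_eval j₀).comp (Prod.fst_surjective.comp φ.surjective)⟩

theorem exists_rat_character_infinite_range {H : Type*} [Group H] [Group.FG H] {A : Type*}
    [CommGroup A] (φ : H →* A) (hφ : Infinite φ.range) : ∃ ρ : H →* ℚˣ, Infinite ρ.range := by
  obtain ⟨χ, hχ⟩ := CommGroup.exists_surjective_multiplicative_int φ.range
  refine ⟨(zpowersHom ℚˣ (Units.mk0 2 two_ne_zero)).comp (χ.comp φ.rangeRestrict), ?_⟩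
  rw [MonoidHom.infinite_range_iff, MonoidHom.coe_comp, MonoidHom.coe_comp,
    (hχ.comp φ.rangeRestrict_surjective).range_comp]
  refine Set.infinite_range_of_injective fun a b hab => ?_
  have h := congrArg Units.val hab
  simp only [zpowersHom_apply, Units.val_zpow_eq_zpow_val, Units.val_mk0] at h
  exact Multiplicative.toAdd.injective (zpow_right_injective₀ two_pos (by norm_num) h)

theorem hasInfiniteLinearImage_rat_of_finiteIndex {Γ : Type*} [Group Γ] [Group.FG Γ]
    (H : Subgroup Γ) [H.FiniteIndex] {A : Type*} [CommGroup A] (φ : H →* A)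
    (hφ : Infinite φ.range) : HasInfiniteLinearImage Γ ℚ :=
  have ⟨ρ, hρ⟩ := exists_rat_character_infinite_range φ hφ
  hasInfiniteLinearImage_of_finiteIndex H ρ hρ

section Congruence

variable (n : Type*) [Fintype n] [DecidableEq n] {R : Type*} [CommRing R]

def congruenceSubgroup (I : Ideal R) : Subgroup (GL n R) :=
  (GeneralLinearGroup.map (Ideal.Quotient.mk I)).ker

variable {n} {I J : Ideal R}

theorem mem_congruenceSubgroup_iff {g : GL n R} :
    g ∈ congruenceSubgroup n I ↔ ∀ i j, ((g : Matrix n n R) - 1) i j ∈ I := by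
  simp [congruenceSubgroup, Units.ext_iff, ← Matrix.ext_iff, ← Ideal.Quotient.eq, one_apply,
    apply_ite, Ideal.Quotient.eq_zero_iff_mem]

theorem congruenceSubgroup_mono (h : I ≤ J) : congruenceSubgroup n I ≤ congruenceSubgroup n J :=
  fun _ hg => mem_congruenceSubgroup_iff.mpr fun i j => h (mem_congruenceSubgroup_iff.mp hg i j)

theorem congruenceSubgroup_bot : congruenceSubgroup n (⊥ : Ideal R) = ⊥ := by
  ext g
  rw [mem_congruenceSubgroup_iff, Subgroup.mem_bot, Units.ext_iff, ← Matrix.ext_iff]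
  simp only [Ideal.mem_bot, Matrix.sub_apply, sub_eq_zero, Units.val_one]

theorem congruenceSubgroup_sInf (S : Set (Ideal R)) :
    congruenceSubgroup n (sInf S) = ⨅ I : S, congruenceSubgroup n (I : Ideal R) := by
  ext g
  simp only [mem_congruenceSubgroup_iff, Subgroup.mem_iInf, Ideal.mem_sInf]
  exact ⟨fun h I i j => h i j I.2, fun h i j I hI => h ⟨I, hI⟩ i j⟩

theorem sub_one_mul_sub_one_apply_mem {g h : GL n R} (hg : g ∈ congruenceSubgroup n I)
    (hh : h ∈ congruenceSubgroup n I) (i j : n) :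
    (((g : Matrix n n R) - 1) * ((h : Matrix n n R) - 1)) i j ∈ I * I :=
  Ideal.sum_mem _ fun k _ => Ideal.mul_mem_mul (mem_congruenceSubgroup_iff.mp hg i k)
    (mem_congruenceSubgroup_iff.mp hh k j)

/-- Since `(g - 1) (h - 1) ≡ 0` modulo `J`, the map `g ↦ g - 1 mod J` turns products into sums. -/
def congruenceLog (hIJ : I * I ≤ J) :
    congruenceSubgroup n I →* Multiplicative (Matrix n n (R ⧸ J)) where
  toFun g := .ofAdd ((Ideal.Quotient.mk J).mapMatrix ((g : GL n R) - 1))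
  map_one' := by simp
  map_mul' g h := by
    rw [← ofAdd_add, ← map_add]
    congr 1
    rw [← sub_eq_zero, ← map_sub]
    ext i j
    have : (((g * h : congruenceSubgroup n I) : GL n R) : Matrix n n R) - 1 -
        (((g : GL n R) - 1) + ((h : GL n R) - 1)) = ((g : GL n R) - 1) * ((h : GL n R) - 1) := by
      rw [Subgroup.coe_mul, Units.val_mul]
      noncomm_ring
    rw [this, RingHom.mapMatrix_apply, map_apply, Matrix.zero_apply, Ideal.Quotient.eq_zero_iff_mem]
    exact hIJ (sub_one_mul_sub_one_apply_mem g.2 h.2 i j)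

theorem congruenceLog_eq_one_iff (hIJ : I * I ≤ J) (g : congruenceSubgroup n I) :
    congruenceLog hIJ g = 1 ↔ (g : GL n R) ∈ congruenceSubgroup n J := by
  simp [congruenceLog, mem_congruenceSubgroup_iff, ← ofAdd_zero, ← Matrix.ext_iff, sub_eq_zero,
    Ideal.Quotient.mk_eq_mk_iff_sub_mem]

end Congruence

section FiniteIndex

variable {Γ : Type*} [Group Γ] {n : Type*} [Fintype n] [DecidableEq n]

theorem Subgroup.finiteIndex_of_finiteIndex_subgroupOf {H K : Subgroup Γ} (hKH : K ≤ H)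
    [H.FiniteIndex] [(K.subgroupOf H).FiniteIndex] : K.FiniteIndex :=
  ⟨by
    rw [← relIndex_mul_index hKH]
    exact mul_ne_zero FiniteIndex.index_ne_zero FiniteIndex.index_ne_zero⟩

theorem finiteIndex_comap_congruenceSubgroup_of_mul_le [Group.FG Γ] {R : Type*} [CommRing R]
    (f : Γ →* GL n R) {I J : Ideal R} (hIJ : I * I ≤ J) (hJI : J ≤ I)
    [((congruenceSubgroup n I).comap f).FiniteIndex] (hℚ : ¬HasInfiniteLinearImage Γ ℚ) :
    ((congruenceSubgroup n J).comap f).FiniteIndex := by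
  set H := (congruenceSubgroup n I).comap f
  let φ := (congruenceLog hIJ).comp (f.subgroupComap (congruenceSubgroup n I))
  have : Finite φ.range := by
    by_contra h
    exact hℚ (hasInfiniteLinearImage_rat_of_finiteIndex H φ (not_finite_iff_infinite.mp h))
  have hker : φ.ker = ((congruenceSubgroup n J).comap f).subgroupOf H := by
    ext γ
    exact congruenceLog_eq_one_iff hIJ _
  have : (((congruenceSubgroup n J).comap f).subgroupOf H).FiniteIndex := hker ▸ inferInstance
  exact Subgroup.finiteIndex_of_finiteIndex_subgroupOf
    (Subgroup.comap_mono (congruenceSubgroup_mono hJI))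

theorem finiteIndex_comap_congruenceSubgroup_nilradical {R : Type} [CommRing R]
    [IsNoetherianRing R] (f : Γ →* GL n R)
    (hK : ∀ (K : Type) [Field K], ¬HasInfiniteLinearImage Γ K) :
    ((congruenceSubgroup n (nilradical R)).comap f).FiniteIndex := by
  have : Finite (minimalPrimes R) := minimalPrimes.finite_of_isNoetherianRing R
  rw [nilradical, Ideal.zero_eq_bot, ← Ideal.sInf_minimalPrimes, congruenceSubgroup_sInf,
    Subgroup.comap_iInf]
  refine Subgroup.finiteIndex_iInf fun p => ?_
  have : (p : Ideal R).IsPrime := p.2.isPrime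
  have : Finite ((GeneralLinearGroup.map (Ideal.Quotient.mk (p : Ideal R))).comp f).range := by
    by_contra h
    exact hK _ (hasInfiniteLinearImage_of_injective
      (IsFractionRing.injective (R ⧸ (p : Ideal R)) (FractionRing (R ⧸ (p : Ideal R)))) _
      (not_finite_iff_infinite.mp h))
  rw [congruenceSubgroup, MonoidHom.comap_ker]
  infer_instance

end FiniteIndex

theorem exists_field_hasInfiniteLinearImage_of_isNoetherianRing {Γ : Type*} [Group Γ]
    [Group.FG Γ] {n : Type*} [Fintype n] [DecidableEq n] {R : Type} [CommRing R]
    [IsNoetherianRing R] (f : Γ →* GL n R) (hf : Infinite f.range) :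
    ∃ (K : Type) (_ : Field K), HasInfiniteLinearImage Γ K := by
  by_contra! hK
  obtain ⟨k, hk⟩ := IsNoetherianRing.isNilpotent_nilradical R
  have hfin : ∀ j ≥ 1, ((congruenceSubgroup n (nilradical R ^ j)).comap f).FiniteIndex := by
    intro j hj
    induction j, hj using Nat.le_induction with
    | base => simpa using finiteIndex_comap_congruenceSubgroup_nilradical f hK
    | succ j hj ih =>
      refine finiteIndex_comap_congruenceSubgroup_of_mul_le f ?_ (Ideal.pow_le_pow_right j.le_succ)
        (hK ℚ _)
      rw [← pow_add]
      exact Ideal.pow_le_pow_right (by omega)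
  have := hfin (k + 1) k.succ_pos
  rw [pow_succ, hk, zero_mul, Ideal.zero_eq_bot, congruenceSubgroup_bot,
    MonoidHom.comap_bot] at this
  have : Finite f.range := Nat.finite_of_card_ne_zero (Subgroup.index_ker f ▸ this.index_ne_zero)
  exact not_finite f.range

theorem Subring.isNoetherianRing_closure {R : Type*} [CommRing R] {T : Set R} (hT : T.Finite) :
    IsNoetherianRing (Subring.closure T) :=
  have : Algebra.FiniteType ℤ (Algebra.adjoin ℤ T) := .adjoin_of_finite hT
  have : Algebra.FiniteType ℤ (Subring.closure T) :=
    .equiv this (Subring.closureEquivAdjoinInt T).symm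
  Algebra.FiniteType.isNoetherianRing ℤ _

theorem exists_isNoetherianRing_infinite_range {Γ : Type*} [Group Γ] [Group.FG Γ] {n : Type*}
    [Fintype n] [DecidableEq n] {R : Type u} [CommRing R] (f : Γ →* GL n R)
    (hf : Infinite f.range) : ∃ (R₀ : Type u) (_ : CommRing R₀) (_ : IsNoetherianRing R₀)
      (f₀ : Γ →* GL n R₀), Infinite f₀.range := by
  obtain ⟨S, hS, hSfin⟩ := Group.fg_iff.mp ‹Group.FG Γ›
  set T : Set R := ⋃ s ∈ S,
    Set.range (uncurry (f s : Matrix n n R)) ∪ Set.range (uncurry (↑(f s)⁻¹ : Matrix n n R))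
  have hT : T.Finite := hSfin.biUnion fun _ _ => (Set.finite_range _).union (Set.finite_range _)
  have hrange : f.range ≤ (GeneralLinearGroup.map (Subring.closure T).subtype).range := by
    rw [MonoidHom.range_eq_map, ← hS, MonoidHom.map_closure, Subgroup.closure_le]
    rintro _ ⟨s, hs, rfl⟩
    exact GeneralLinearGroup.mem_range_map_subtype _
      (fun i j => Subring.subset_closure (Set.mem_biUnion hs (.inl ⟨(i, j), rfl⟩)))
      (fun i j => Subring.subset_closure (Set.mem_biUnion hs (.inr ⟨(i, j), rfl⟩)))
  obtain ⟨f₀, hf₀⟩ := MonoidHom.exists_comp_eq_of_range_le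
    (GeneralLinearGroup.map_injective Subtype.val_injective) hrange
  exact ⟨_, inferInstance, Subring.isNoetherianRing_closure hT, f₀,
    MonoidHom.infinite_range_of_infinite_range_comp _ (hf₀ ▸ hf)⟩

/-- For a finitely generated group `Γ`, there exist a commutative unital ring `R`, an
integer `n ≥ 1` and a homomorphism `Γ → GL_n(R)` with infinite image if and only if there
exist a field `K`, an integer `n ≥ 1` and a homomorphism `Γ → GL_n(K)` with infinite image. -/
theorem ringLinear_iff_fieldLinear_infiniteImage (Γ : Type) [Group Γ] [Group.FG Γ] :
    (∃ (R : Type) (_ : CommRing R) (n : ℕ), 1 ≤ n ∧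
      ∃ f : Γ →* Matrix.GeneralLinearGroup (Fin n) R, Infinite ↥f.range) ↔
    (∃ (K : Type) (_ : Field K) (n : ℕ), 1 ≤ n ∧
      ∃ f : Γ →* Matrix.GeneralLinearGroup (Fin n) K, Infinite ↥f.range) := by
  constructor
  · rintro ⟨R, _, n, -, f, hf⟩
    obtain ⟨R₀, _, _, f₀, hf₀⟩ := exists_isNoetherianRing_infinite_range f hf
    obtain ⟨K, _, m, π, hπ⟩ := exists_field_hasInfiniteLinearImage_of_isNoetherianRing f₀ hf₀
    have : Nonempty (Fin m) := GeneralLinearGroup.nonempty_of_infinite_range π hπ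
    exact ⟨K, inferInstance, m, Fin.pos_iff_nonempty.mpr this, π, hπ⟩
  · rintro ⟨K, _, n, hn, f, hf⟩
    exact ⟨K, inferInstance, n, hn, f, hf⟩
end

section
/- Let R be a commutative unital ring whose nilradical 𝔫 satisfies 𝔫^d = 0 for some integer d ≥ 1, and let n ≥ 1. Then the kernel of the natural group homomorphism GL_n(R) → GL_n(R/𝔫) induced by the quotient map R → R/𝔫 is a nilpotent group. -/
/-!
The kernel is the principal congruence subgroup `Γ(𝔫)`. Writing `g = 1 + A`, `h = 1 + B`, one has
`⁅g, h⁆ - 1 = (AB - BA)(hg)⁻¹`, so `⁅Γ(I), Γ(J)⁆ ≤ Γ(IJ)`. Hence the `m`-th term of the lower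
central series of `Γ(I)` lies in `Γ(I^(m+1))`, which is trivial once `I` is nilpotent.
-/

open scoped commutatorElement

theorem Units.val_commutatorElement_sub_one {A : Type*} [Ring A] (g h : Aˣ) :
    ((⁅g, h⁆ : Aˣ) : A) - 1 = ((g - 1) * (h - 1) - (h - 1) * (g - 1) : A) * ↑(h * g)⁻¹ := by
  have hgh : ⁅g, h⁆ = g * h * (h * g)⁻¹ := by group
  have hhg : (h * g : A) * ↑(h * g)⁻¹ = 1 := by rw [← Units.val_mul, Units.mul_inv]
  calc ((⁅g, h⁆ : Aˣ) : A) - 1 = (g * h : A) * ↑(h * g)⁻¹ - (h * g : A) * ↑(h * g)⁻¹ := by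
        rw [hhg, hgh, Units.val_mul, Units.val_mul]
    _ = _ := by rw [← sub_mul]; noncomm_ring

namespace Matrix

variable {ι R : Type*} [Fintype ι] [CommRing R]

theorem mul_apply_mem_mul {I J : Ideal R} {A B : Matrix ι ι R}
    (hA : ∀ i j, A i j ∈ I) (hB : ∀ i j, B i j ∈ J) (i j : ι) : (A * B) i j ∈ I * J :=
  Ideal.sum_mem _ fun k _ => Ideal.mul_mem_mul (hA i k) (hB k j)

namespace GeneralLinearGroup

variable [DecidableEq ι]

variable (ι) in
def congruenceSubgroup (I : Ideal R) : Subgroup (GL ι R) :=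
  (map (Ideal.Quotient.mk I)).ker

theorem mem_congruenceSubgroup_iff {I : Ideal R} {g : GL ι R} :
    g ∈ congruenceSubgroup ι I ↔ ∀ i j, ((g : Matrix ι ι R) - 1) i j ∈ I := by
  simp only [congruenceSubgroup, MonoidHom.mem_ker, Units.ext_iff, ← Matrix.ext_iff, GeneralLinearGroup.map_apply,
    Units.val_one, sub_apply, ← Ideal.Quotient.mk_eq_mk_iff_sub_mem, one_apply,
    apply_ite (Ideal.Quotient.mk I), map_one, map_zero]

theorem commutator_congruenceSubgroup_le (I J : Ideal R) :
    ⁅congruenceSubgroup ι I, congruenceSubgroup ι J⁆ ≤ congruenceSubgroup ι (I * J) := by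
  refine Subgroup.commutator_le.2 fun g hg h hh => ?_
  rw [mem_congruenceSubgroup_iff] at hg hh ⊢
  intro i j
  rw [Units.val_commutatorElement_sub_one, ← Ideal.mul_top (I * J)]
  refine mul_apply_mem_mul (fun i j => sub_mem ?_ ?_) (fun _ _ => Submodule.mem_top) i j
  · exact mul_apply_mem_mul hg hh i j
  · rw [Ideal.mul_comm]
    exact mul_apply_mem_mul hh hg i j

theorem lowerCentralSeries_congruenceSubgroup_le (I : Ideal R) (m : ℕ) :
    (congruenceSubgroup ι I).lowerCentralSeries m ≤ congruenceSubgroup ι (I ^ (m + 1)) := by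
  induction m with
  | zero => simp
  | succ m ih =>
    rw [Subgroup.lowerCentralSeries_succ, pow_succ]
    exact (Subgroup.commutator_mono ih le_rfl).trans (commutator_congruenceSubgroup_le _ _)

theorem congruenceSubgroup_bot : congruenceSubgroup ι (⊥ : Ideal R) = ⊥ := by
  refine (Subgroup.eq_bot_iff_forall _).2 fun g hg => Units.ext <| sub_eq_zero.1 ?_
  ext i j
  exact (mem_congruenceSubgroup_iff.1 hg i j : _ ∈ (⊥ : Ideal R))

theorem isNilpotent_congruenceSubgroup {I : Ideal R} (hI : IsNilpotent I) :
    Group.IsNilpotent (congruenceSubgroup ι I) := by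
  obtain ⟨d, hd⟩ := hI
  refine (Subgroup.isNilpotent_iff_lowerCentralSeries _).2 ⟨d, le_bot_iff.1 ?_⟩
  calc _ ≤ congruenceSubgroup ι (I ^ (d + 1)) := lowerCentralSeries_congruenceSubgroup_le I d
    _ = ⊥ := by rw [pow_succ, hd, zero_mul, Ideal.zero_eq_bot, congruenceSubgroup_bot]

end GeneralLinearGroup

end Matrix

theorem ker_glMap_nilradical_isNilpotent_general
    (R : Type) [CommRing R] (d : ℕ) (hnil : (nilradical R) ^ d = ⊥)
    (n : ℕ) :
    Group.IsNilpotent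
      ↥((Matrix.GeneralLinearGroup.map (Ideal.Quotient.mk (nilradical R)) :
          Matrix.GeneralLinearGroup (Fin n) R →*
            Matrix.GeneralLinearGroup (Fin n) (R ⧸ nilradical R)).ker) :=
  Matrix.GeneralLinearGroup.isNilpotent_congruenceSubgroup ⟨d, hnil⟩

/-- If the nilradical `𝔫` of a commutative unital ring `R` satisfies `𝔫^d = 0` for some
`d ≥ 1`, then the kernel of the natural homomorphism `GL_n(R) → GL_n(R/𝔫)` is a nilpotent
group. -/
theorem ker_glMap_nilradical_isNilpotent
    (R : Type) [CommRing R] (d : ℕ) (hd : 1 ≤ d) (hnil : (nilradical R) ^ d = ⊥)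
    (n : ℕ) (hn : 1 ≤ n) :
    Group.IsNilpotent
      ↥((Matrix.GeneralLinearGroup.map (Ideal.Quotient.mk (nilradical R)) :
          Matrix.GeneralLinearGroup (Fin n) R →*
            Matrix.GeneralLinearGroup (Fin n) (R ⧸ nilradical R)).ker) :=
  ker_glMap_nilradical_isNilpotent_general R d hnil n
end
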